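/- arXiv:1205.1483 — 2 statements merged into one kernel-verified Lean document; each statement's English description precedes it below -/
import Mathlib

section
/- Converse for neighboring interference (D antidote gaps on one side): consider K messages W_1, …, W_K (independent, uniform over alphabets of sizes giving rates R_i) encoded into S with H(S) ≤ n, such that for each i (indices mod K), W_i is a deterministic function of (S, W_{i+1}, …, W_{i+D})^c-complement side information; i.e., W_i is determined by S together with all messages except W_i, W_{i+1}, …, W_{i+D}. Then H(W_i) + H(W_{i+1}) + ⋯ + H(W_{i+D}) ≤ H(S) for every i. -/
open Finset

/-- Probability that `X` takes the value `x`. -/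
noncomputable def pr {Ω α : Type*} [Fintype Ω] [DecidableEq α]
    (p : Ω → ℝ) (X : Ω → α) (x : α) : ℝ :=
  ∑ ω ∈ Finset.univ.filter (fun ω => X ω = x), p ω

/-- Shannon entropy. -/
noncomputable def H {Ω α : Type*} [Fintype Ω] [Fintype α] [DecidableEq α]
    (p : Ω → ℝ) (X : Ω → α) : ℝ :=
  ∑ x : α, Real.negMulLog (pr p X x)

/-- Conditional entropy `H(X | Y) = H(X, Y) − H(Y)`. -/
noncomputable def condH {Ω α β : Type*} [Fintype Ω] [Fintype α] [Fintype β]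
    [DecidableEq α] [DecidableEq β] (p : Ω → ℝ) (X : Ω → α) (Y : Ω → β) : ℝ :=
  H p (fun ω => (X ω, Y ω)) - H p Y

/-!
Successive decoding: `S` together with the messages outside the window `{i, …, i + D}` recovers
`W i`; adding it to the side information recovers `W (i + 1)`, and so on, so revealing the window
does not change `H(S, side information)`. Hence, by independence and subadditivity,
`∑ⱼ H(Wⱼ) ≤ H(S, all W) = H(S, W outside the window) ≤ H(S) + ∑_{j ∉ window} H(Wⱼ)`.

All entropy facts are proved through `H p X = ∑ ω, p ω * -log (pr p X (X ω))`, which turns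
monotonicity under functions, the case of zero conditional entropy and Gibbs' inequality into
pointwise comparisons of `pr`.
-/

namespace NeighboringInterference

section Entropy

variable {Ω α β : Type*} [Fintype Ω] {p : Ω → ℝ}

lemma le_pr [DecidableEq α] (hp : ∀ ω, 0 ≤ p ω) (X : Ω → α) (ω : Ω) :
    p ω ≤ pr p X (X ω) :=
  Finset.single_le_sum (fun ω' _ => hp ω') (Finset.mem_filter.2 ⟨Finset.mem_univ ω, rfl⟩)

lemma sum_pr_mul [Fintype α] [DecidableEq α] (X : Ω → α) (g : α → ℝ) :
    ∑ x, pr p X x * g x = ∑ ω, p ω * g (X ω) := by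
  rw [← Finset.sum_fiberwise Finset.univ X (fun ω => p ω * g (X ω))]
  refine Finset.sum_congr rfl fun x _ => ?_
  rw [pr, Finset.sum_mul]
  exact Finset.sum_congr rfl fun ω hω => by rw [(Finset.mem_filter.1 hω).2]

lemma sum_pr [Fintype α] [DecidableEq α] (X : Ω → α) : ∑ x, pr p X x = ∑ ω, p ω :=
  Finset.sum_fiberwise _ _ _

lemma H_eq_sum_neg_log [Fintype α] [DecidableEq α] (X : Ω → α) :
    H p X = ∑ ω, p ω * -Real.log (pr p X (X ω)) := by
  rw [H, ← sum_pr_mul X fun x => -Real.log (pr p X x)]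
  simp only [Real.negMulLog, neg_mul, mul_neg]

lemma pr_le_pr_comp [DecidableEq α] [DecidableEq β] (hp : ∀ ω, 0 ≤ p ω) (f : α → β)
    (X : Ω → α) (ω : Ω) : pr p X (X ω) ≤ pr p (fun ω => f (X ω)) (f (X ω)) :=
  Finset.sum_le_sum_of_subset_of_nonneg
    (fun ω' h => by simp_all) (fun ω' _ _ => hp ω')

lemma H_le_of_comp [Fintype α] [Fintype β] [DecidableEq α] [DecidableEq β]
    (hp : ∀ ω, 0 ≤ p ω) {X : Ω → α} {Y : Ω → β} (f : α → β) (hf : ∀ ω, f (X ω) = Y ω) :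
    H p Y ≤ H p X := by
  obtain rfl : (fun ω => f (X ω)) = Y := funext hf
  rw [H_eq_sum_neg_log, H_eq_sum_neg_log]
  refine Finset.sum_le_sum fun ω _ => ?_
  rcases (hp ω).eq_or_lt with h | h
  · simp [← h]
  · have hX := h.trans_le (le_pr hp X ω)
    exact mul_le_mul_of_nonneg_left
      (neg_le_neg (Real.log_le_log hX (pr_le_pr_comp hp f X ω))) h.le

lemma H_const [Fintype α] [DecidableEq α] (hp1 : ∑ ω, p ω = 1) (c : α) :
    H p (fun _ => c) = 0 := by
  have hc : pr p (fun _ => c) c = 1 := by simpa [pr] using hp1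
  simp [H_eq_sum_neg_log, hc]

lemma H_pair_le [Fintype α] [Fintype β] [DecidableEq α] [DecidableEq β]
    (hp : ∀ ω, 0 ≤ p ω) (hp1 : ∑ ω, p ω = 1) (X : Ω → α) (Y : Ω → β) :
    H p (fun ω => (X ω, Y ω)) ≤ H p X + H p Y := by
  set Z : Ω → α × β := fun ω => (X ω, Y ω)
  set ratio : α × β → ℝ := fun z => pr p X z.1 * pr p Y z.2 / pr p Z z
  -- Gibbs' inequality, from `log t ≤ t - 1` at `t = ratio (Z ω)`
  have hterm : ∀ ω, p ω * -Real.log (pr p Z (Z ω)) ≤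
      p ω * -Real.log (pr p X (X ω)) + p ω * -Real.log (pr p Y (Y ω))
        + (p ω * ratio (Z ω) - p ω) := by
    intro ω
    rcases (hp ω).eq_or_lt with h | h
    · simp [← h]
    have hZ := h.trans_le (le_pr hp Z ω)
    have hX := h.trans_le (le_pr hp X ω)
    have hY := h.trans_le (le_pr hp Y ω)
    have hlog := Real.log_le_sub_one_of_pos (div_pos (mul_pos hX hY) hZ)
    rw [Real.log_div (mul_pos hX hY).ne' hZ.ne', Real.log_mul hX.ne' hY.ne'] at hlog
    have := mul_le_mul_of_nonneg_left hlog h.le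
    simp only [ratio, Z] at this ⊢
    linarith
  have hratio : ∑ ω, p ω * ratio (Z ω) ≤ 1 := by
    rw [← sum_pr_mul]
    calc ∑ z, pr p Z z * ratio z ≤ ∑ z : α × β, pr p X z.1 * pr p Y z.2 := by
          refine Finset.sum_le_sum fun z _ => ?_
          rcases eq_or_ne (pr p Z z) 0 with h | h
          · simp only [h, zero_mul]
            exact mul_nonneg (Finset.sum_nonneg fun _ _ => hp _)
              (Finset.sum_nonneg fun _ _ => hp _)
          · exact (mul_div_cancel₀ _ h).le
      _ = 1 := by
          rw [Fintype.sum_prod_type, ← Finset.sum_mul_sum, sum_pr, sum_pr, hp1, one_mul]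
  rw [H_eq_sum_neg_log, H_eq_sum_neg_log X, H_eq_sum_neg_log Y, ← Finset.sum_add_distrib]
  have := Finset.sum_le_sum fun ω (_ : ω ∈ Finset.univ) => hterm ω
  rw [Finset.sum_add_distrib, Finset.sum_sub_distrib, hp1] at this
  linarith

lemma H_pi_eq_sum {ι : Type*} [Fintype ι] [DecidableEq ι] [Fintype α] [DecidableEq α]
    (hp : ∀ ω, 0 ≤ p ω) (W : ι → Ω → α)
    (hindep : ∀ x : ι → α, pr p (fun ω j => W j ω) x = ∏ j, pr p (W j) (x j)) :
    H p (fun ω j => W j ω) = ∑ j, H p (W j) := by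
  simp only [H_eq_sum_neg_log, hindep]
  rw [Finset.sum_comm]
  refine Finset.sum_congr rfl fun ω _ => ?_
  rcases (hp ω).eq_or_lt with h | h
  · simp [← h]
  rw [← Finset.mul_sum, Finset.sum_neg_distrib,
    Real.log_prod fun j _ => (h.trans_le (le_pr hp (W j) ω)).ne']

end Entropy

section Determines

variable {Ω α β γ : Type*} {p : Ω → ℝ}

def Determines (p : Ω → ℝ) (Y : Ω → β) (X : Ω → α) : Prop :=
  ∀ ω ω', 0 < p ω → 0 < p ω' → Y ω = Y ω' → X ω = X ω'

lemma Determines.of_comp {X : Ω → α} {Y : Ω → β} {Y' : Ω → γ} (h : Determines p Y X)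
    (f : γ → β) (hf : ∀ ω, f (Y' ω) = Y ω) : Determines p Y' X :=
  fun ω ω' hω hω' hY => h ω ω' hω hω' (by rw [← hf, ← hf, hY])

variable [Fintype Ω] [DecidableEq α] [DecidableEq β] {X : Ω → α} {Y : Ω → β}

lemma pr_pair_eq_of_determines (hp : ∀ ω, 0 ≤ p ω) (h : Determines p Y X) {ω : Ω}
    (hω : 0 < p ω) : pr p (fun ω => (X ω, Y ω)) (X ω, Y ω) = pr p Y (Y ω) := by
  refine Finset.sum_subset (fun ω' h' => by simp_all) fun ω' hω' hω'XY => ?_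
  refine le_antisymm (not_lt.1 fun hpos => hω'XY ?_) (hp ω')
  have hY : Y ω' = Y ω := (Finset.mem_filter.1 hω').2
  simp [hY, h ω' ω hpos hω hY]

lemma pr_pair_add_le (hp : ∀ ω, 0 ≤ p ω) {ω ω' : Ω} (hY : Y ω' = Y ω) (hX : X ω' ≠ X ω) :
    pr p (fun ω => (X ω, Y ω)) (X ω, Y ω) + p ω' ≤ pr p Y (Y ω) := by
  classical
  rw [pr, add_comm, ← Finset.sum_insert (by simp [hX])]
  refine Finset.sum_le_sum_of_subset_of_nonneg (fun ω'' h => ?_) fun _ _ _ => hp _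
  rcases Finset.mem_insert.1 h with rfl | h
  · simp [hY]
  · simp_all

variable [Fintype α] [Fintype β]

lemma H_pair_eq_of_determines (hp : ∀ ω, 0 ≤ p ω) (h : Determines p Y X) :
    H p (fun ω => (X ω, Y ω)) = H p Y := by
  rw [H_eq_sum_neg_log, H_eq_sum_neg_log]
  refine Finset.sum_congr rfl fun ω _ => ?_
  rcases (hp ω).eq_or_lt with h0 | h0
  · simp [← h0]
  · rw [pr_pair_eq_of_determines hp h h0]

lemma determines_of_condH_eq_zero (hp : ∀ ω, 0 ≤ p ω) (h : condH p X Y = 0) :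
    Determines p Y X := by
  set Z : Ω → α × β := fun ω => (X ω, Y ω)
  have hgap : ∀ ω ∈ Finset.univ,
      0 ≤ p ω * (Real.log (pr p Y (Y ω)) - Real.log (pr p Z (Z ω))) := by
    intro ω _
    rcases (hp ω).eq_or_lt with h0 | h0
    · simp [← h0]
    · exact mul_nonneg h0.le (sub_nonneg.2 (Real.log_le_log (h0.trans_le (le_pr hp Z ω))
        (pr_le_pr_comp hp Prod.snd Z ω)))
  have hsum : ∑ ω, p ω * (Real.log (pr p Y (Y ω)) - Real.log (pr p Z (Z ω))) = 0 := by
    rw [condH, H_eq_sum_neg_log, H_eq_sum_neg_log, ← Finset.sum_sub_distrib] at h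
    rw [← h]
    exact Finset.sum_congr rfl fun ω _ => by ring
  have heq : ∀ ω, 0 < p ω → pr p Z (Z ω) = pr p Y (Y ω) := by
    intro ω hω
    have hZ := hω.trans_le (le_pr hp Z ω)
    have hY := hω.trans_le (le_pr hp Y ω)
    have := (Finset.sum_eq_zero_iff_of_nonneg hgap).1 hsum ω (Finset.mem_univ ω)
    exact Real.log_injOn_pos hZ hY (by nlinarith)
  intro ω ω' hω hω' hY
  by_contra hX
  linarith [heq ω hω, pr_pair_add_le hp hY.symm (Ne.symm hX)]

end Determines

section Reveal

variable {Ω ι α β : Type*} [Fintype Ω] [Fintype ι] [DecidableEq ι] [Fintype α] [DecidableEq α]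
  [Inhabited α] [Fintype β] [DecidableEq β] {p : Ω → ℝ}

def reveal (s : Finset ι) (W : ι → Ω → α) (ω : Ω) : ι → α :=
  s.piecewise (fun j => W j ω) default

lemma H_reveal_le (hp : ∀ ω, 0 ≤ p ω) (hp1 : ∑ ω, p ω = 1) (W : ι → Ω → α) (s : Finset ι) :
    H p (reveal s W) ≤ ∑ j ∈ s, H p (W j) := by
  induction s using Finset.induction_on with
  | empty =>
    have : reveal ∅ W = fun _ => default := funext fun ω => Finset.piecewise_empty _ _
    rw [this, H_const hp1, Finset.sum_empty]
  | insert a s ha ih =>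
    calc H p (reveal (insert a s) W)
        ≤ H p (fun ω => (W a ω, reveal s W ω)) :=
          H_le_of_comp hp (fun z => Function.update z.2 a z.1) fun ω => by
            simp [reveal, Finset.piecewise_insert]
      _ ≤ H p (W a) + H p (reveal s W) := H_pair_le hp hp1 _ _
      _ ≤ ∑ j ∈ insert a s, H p (W j) := by rw [Finset.sum_insert ha]; linarith

lemma H_pair_reveal_insert_eq (hp : ∀ ω, 0 ≤ p ω) (S : Ω → β) (W : ι → Ω → α)
    (s : Finset ι) (a : ι) (h : Determines p (fun ω => (S ω, reveal s W ω)) (W a)) :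
    H p (fun ω => (S ω, reveal (insert a s) W ω)) = H p (fun ω => (S ω, reveal s W ω)) := by
  refine le_antisymm ?_ (H_le_of_comp hp (fun z => (z.1, s.piecewise z.2 default)) fun ω => ?_)
  · calc _ ≤ H p (fun ω => (W a ω, S ω, reveal s W ω)) :=
          H_le_of_comp hp (fun z => (z.2.1, Function.update z.2.2 a z.1)) fun ω => by
            simp [reveal, Finset.piecewise_insert]
      _ = _ := H_pair_eq_of_determines hp h
  · simp [reveal, Finset.piecewise_piecewise_of_subset_left (Finset.subset_insert a s)]

lemma H_pair_reveal_union_image_eq (hp : ∀ ω, 0 ≤ p ω) (S : Ω → β) (W : ι → Ω → α)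
    (s : Finset ι) (e : ℕ → ι) (m : ℕ)
    (h : ∀ k < m, Determines p (fun ω => (S ω, reveal (s ∪ (range k).image e) W ω)) (W (e k))) :
    H p (fun ω => (S ω, reveal (s ∪ (range m).image e) W ω)) =
      H p (fun ω => (S ω, reveal s W ω)) := by
  induction m with
  | zero => simp
  | succ k ih =>
    rw [Finset.range_add_one, Finset.image_insert, Finset.union_insert,
      H_pair_reveal_insert_eq hp S W _ _ (h k k.lt_succ_self), ih fun k' hk' => h k' (by omega)]

lemma sum_H_le_of_H_pair_reveal_compl_eq (hp : ∀ ω, 0 ≤ p ω) (hp1 : ∑ ω, p ω = 1)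
    (S : Ω → β) (W : ι → Ω → α)
    (hindep : ∀ x : ι → α, pr p (fun ω j => W j ω) x = ∏ j, pr p (W j) (x j))
    (t : Finset ι)
    (hdec : H p (fun ω => (S ω, reveal tᶜ W ω)) = H p (fun ω => (S ω, reveal univ W ω))) :
    ∑ j ∈ t, H p (W j) ≤ H p S := by
  have hall : H p (fun ω j => W j ω) ≤ H p (fun ω => (S ω, reveal univ W ω)) :=
    H_le_of_comp hp Prod.snd fun ω => by simp [reveal]
  have hsplit := H_pair_le hp hp1 S (reveal tᶜ W)
  have hrest := H_reveal_le hp hp1 W tᶜ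
  rw [H_pi_eq_sum hp W hindep, ← Finset.sum_add_sum_compl t] at hall
  linarith

end Reveal

section Window

variable {K : ℕ}

def window (i : ZMod K) (D : ℕ) : Finset (ZMod K) :=
  (range (D + 1)).image fun d : ℕ => i + d

lemma sum_window {D : ℕ} (hDK : D < K) (f : ZMod K → ℝ) (i : ZMod K) :
    ∑ j ∈ window i D, f j = ∑ d ∈ range (D + 1), f (i + d) := by
  refine Finset.sum_image fun a ha b hb hab => ?_
  have hcast := congrArg ZMod.val (add_left_cancel hab)
  rwa [ZMod.val_cast_of_lt (by simp at ha; omega),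
    ZMod.val_cast_of_lt (by simp at hb; omega)] at hcast

lemma mem_compl_window_union_of_forall_ne [NeZero K] {D k : ℕ} {i j : ZMod K}
    (hj : ∀ d : Fin (D + 1), j ≠ i + (k : ℕ) + (d : ℕ)) :
    j ∈ (window i D)ᶜ ∪ (range k).image fun d : ℕ => i + d := by
  rw [Finset.mem_union, Finset.mem_compl, or_iff_not_imp_left, not_not]
  intro hjw
  obtain ⟨d, hd, rfl⟩ := Finset.mem_image.1 hjw
  refine Finset.mem_image.2 ⟨d, Finset.mem_range.2 ?_, rfl⟩
  by_contra! hkd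
  refine hj ⟨d - k, by simp at hd; omega⟩ ?_
  simp only [Nat.cast_sub hkd]
  ring

end Window

end NeighboringInterference

open NeighboringInterference

theorem neighboring_interference_converse_general
    {Ω α β : Type*} [Fintype Ω] [Fintype α] [Fintype β]
    [DecidableEq α] [DecidableEq β] [Inhabited α]
    (K D : ℕ) [NeZero K] (hDK : D < K)
    (p : Ω → ℝ) (hp : ∀ ω, 0 ≤ p ω) (hp1 : ∑ ω, p ω = 1)
    (W : ZMod K → Ω → α) (S : Ω → β)
    (hindep : ∀ x : ZMod K → α,
      pr p (fun ω => fun j => W j ω) x = ∏ j, pr p (W j) (x j))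
    (hdec : ∀ i : ZMod K,
      condH p (W i)
        (fun ω => (S ω, fun j : ZMod K =>
          if ∀ d : Fin (D + 1), j ≠ i + ((d : ℕ) : ZMod K) then W j ω else default)) = 0) :
    ∀ i : ZMod K,
      ∑ d ∈ Finset.range (D + 1), H p (W (i + (d : ZMod K))) ≤ H p S := by
  intro i
  have hdecode : H p (fun ω => (S ω, reveal (window i D)ᶜ W ω)) =
      H p (fun ω => (S ω, reveal univ W ω)) := by
    rw [← Finset.union_compl (window i D), Finset.union_comm]
    refine (H_pair_reveal_union_image_eq hp S W _ (fun d : ℕ => i + d) (D + 1) fun k _ => ?_).symm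
    refine (determines_of_condH_eq_zero hp (hdec (i + k))).of_comp
      (fun z => (z.1, fun j => if ∀ d : Fin (D + 1), j ≠ i + k + (d : ℕ) then z.2 j else default))
      fun ω => Prod.ext rfl (funext fun j => ?_)
    dsimp only
    split_ifs with hj
    · exact Finset.piecewise_eq_of_mem _ _ _ (mem_compl_window_union_of_forall_ne hj)
    · rfl
  rw [← sum_window hDK (fun j => H p (W j))]
  exact sum_H_le_of_H_pair_reveal_compl_eq hp hp1 S W hindep _ hdecode

/-- Converse for neighboring interference (Theorem 7 outer bound): if the `K`
mutually independent messages `W_i` (indices mod `K`) are encoded into `S` with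
`H(S) ≤ n`, and each `W_i` is a zero-error function of `S` together with all
messages outside the window `{i, i+1, …, i+D}`, then
`H(W_i) + H(W_{i+1}) + ⋯ + H(W_{i+D}) ≤ H(S)` for every `i`. -/
theorem neighboring_interference_converse
    {Ω α β : Type*} [Fintype Ω] [Fintype α] [Fintype β]
    [DecidableEq α] [DecidableEq β] [Inhabited α]
    (K D n : ℕ) [NeZero K] (hDK : D < K)
    (p : Ω → ℝ) (hp : ∀ ω, 0 ≤ p ω) (hp1 : ∑ ω, p ω = 1)
    (W : ZMod K → Ω → α) (S : Ω → β)
    (hindep : ∀ x : ZMod K → α,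
      pr p (fun ω => fun j => W j ω) x = ∏ j, pr p (W j) (x j))
    (hS : H p S ≤ (n : ℝ))
    (hdec : ∀ i : ZMod K,
      condH p (W i)
        (fun ω => (S ω, fun j : ZMod K =>
          if ∀ d : Fin (D + 1), j ≠ i + ((d : ℕ) : ZMod K) then W j ω else default)) = 0) :
    ∀ i : ZMod K,
      ∑ d ∈ Finset.range (D + 1), H p (W (i + (d : ZMod K))) ≤ H p S :=
  neighboring_interference_converse_general K D hDK p hp hp1 W S hindep hdec
end

section
/- Rate-half achievability via spreads (L = 1 case of Theorem 3 achievability): let T messages be partitioned into alignment classes via a map P : {1,…,M} → {1,…,T}, and let V_1, …, V_T ∈ F_q^2 be vectors such that any two of them are linearly independent. For each destination r with desired message index d(r) and interference class t(r) (meaning all non-antidote, non-desired message indices i at destination r satisfy P(i) = t(r)), assume P(d(r)) ≠ t(r). Then for every choice of message symbols x_1, …, x_M ∈ F_q, the symbol x_{d(r)} is determined by S = ∑_i x_i V_{P(i)} together with the antidote symbols {x_i : i ∈ A_r}. -/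
/-- Rate-half achievability decoding step (`L = 1` case of Theorem 3): with
pairwise linearly independent vectors `V_1, …, V_T ∈ F^2`, alignment map `P`,
antidote set `A`, desired index `d ∉ A`, and interference class `t` with
`P i = t` for every non-antidote non-desired `i` and `P d ≠ t`, the desired
symbol `x d` is determined by `S = ∑ i, x i • V (P i)` and the antidote symbols. -/
theorem rate_half_decoding {F : Type*} [Field F] {M T : ℕ}
    (V : Fin T → Fin 2 → F)
    (hV : ∀ s t : Fin T, s ≠ t → LinearIndependent F ![V s, V t])
    (P : Fin M → Fin T) (A : Finset (Fin M)) (d : Fin M) (t : Fin T)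
    (hdA : d ∉ A) (halign : ∀ i, i ∉ A → i ≠ d → P i = t) (hne : P d ≠ t)
    (x y : Fin M → F)
    (hS : ∑ i, x i • V (P i) = ∑ i, y i • V (P i))
    (hAnti : ∀ i ∈ A, x i = y i) :
    x d = y d := by
  set z : Fin M → F := fun i => x i - y i with hz
  have hz0 : ∑ i, z i • V (P i) = 0 := by
    simp only [hz, sub_smul, Finset.sum_sub_distrib, hS, sub_self]
  have hzA : ∀ i ∈ A, z i = 0 := fun i hi => sub_eq_zero.mpr (hAnti i hi)
  have h1' : ∑ i ∈ Finset.univ \ A, z i • V (P i) = ∑ i, z i • V (P i) := by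
    refine Finset.sum_subset (Finset.subset_univ _) (fun i _ hi => ?_)
    have : i ∈ A := by simpa using hi
    simp [hzA i this]
  have hdmem : d ∈ Finset.univ \ A := by simp [hdA]
  have key : z d • V (P d) + (∑ i ∈ (Finset.univ \ A).erase d, z i) • V t = 0 := by
    have h2 : z d • V (P d) + ∑ i ∈ (Finset.univ \ A).erase d, z i • V (P i) = 0 := by
      rw [Finset.add_sum_erase _ (fun i => z i • V (P i)) hdmem, h1', hz0]
    have h3 : ∑ i ∈ (Finset.univ \ A).erase d, z i • V (P i)
        = (∑ i ∈ (Finset.univ \ A).erase d, z i) • V t := by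
      rw [Finset.sum_smul]
      refine Finset.sum_congr rfl (fun i hi => ?_)
      have hiA : i ∉ A := by
        have := Finset.mem_of_mem_erase hi
        simpa using this
      rw [halign i hiA (Finset.ne_of_mem_erase hi)]
    rwa [h3] at h2
  have := (LinearIndependent.pair_iff.mp (hV (P d) t hne) _ _ (by simpa using key)).1
  exact sub_eq_zero.mp this
end
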